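/- Two deterministic finite automata with k and k' states respectively that accept different languages are distinguished by some word of length at most k + k' - 2. -/
import Mathlib

structure DFA' (Q A : Type) where
  init : Q
  step : Q → A → Q
  acc : Q → Prop

def DFA'.steps {Q A : Type} (D : DFA' Q A) : Q → List A → Q
  | q, [] => q
  | q, a :: w => D.steps (D.step q a) w

def DFA'.Accepts {Q A : Type} (D : DFA' Q A) (w : List A) : Prop :=
  D.acc (D.steps D.init w)

namespace DFAAux

attribute [local instance] Classical.propDecidable

variable {S A Q Q' : Type}

def eqv (C : DFA' S A) (n : ℕ) : Setoid S where
  r s t := ∀ w : List A, w.length ≤ n → (C.acc (C.steps s w) ↔ C.acc (C.steps t w))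
  iseqv := ⟨fun _ _ _ => Iff.rfl, fun h w hw => (h w hw).symm,
    fun h1 h2 w hw => (h1 w hw).trans (h2 w hw)⟩

lemma eqv_succ (C : DFA' S A) (n : ℕ) (s t : S) :
    (eqv C (n+1)).r s t ↔
      (eqv C n).r s t ∧ ∀ a, (eqv C n).r (C.step s a) (C.step t a) := by
  constructor
  · intro h
    refine ⟨fun w hw => h w (hw.trans (Nat.le_succ n)), fun a w hw => ?_⟩
    have := h (a :: w) (by simp; omega)
    simpa [DFA'.steps] using this
  · rintro ⟨h0, h1⟩ w hw
    cases w with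
    | nil => exact h0 [] (Nat.zero_le n)
    | cons a w =>
        have hw' : w.length ≤ n := by simp at hw; omega
        have := h1 a w hw'
        simpa [DFA'.steps] using this

lemma eqv_mono (C : DFA' S A) (n : ℕ) {s t : S}
    (h : (eqv C (n+1)).r s t) : (eqv C n).r s t :=
  fun w hw => h w (hw.trans (Nat.le_succ n))

lemma eqv_stable (C : DFA' S A) (n : ℕ)
    (h : ∀ s t, (eqv C n).r s t → (eqv C (n+1)).r s t) :
    ∀ m, n ≤ m → ∀ s t : S, (eqv C n).r s t → (eqv C m).r s t := by
  intro m
  induction m with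
  | zero =>
      intro hm s t hst
      have hn0 : n = 0 := by omega
      subst hn0; exact hst
  | succ k ih =>
      intro hm s t hst
      rcases Nat.lt_or_ge n (k+1) with hk | hk
      · have hnk : n ≤ k := by omega
        rw [eqv_succ]
        refine ⟨ih hnk s t hst, fun a => ?_⟩
        have h1 : (eqv C (n+1)).r s t := h s t hst
        rw [eqv_succ] at h1
        exact ih hnk _ _ (h1.2 a)
      · have : n = k + 1 := by omega
        subst this
        exact hst

lemma card_lt [Fintype S] (s t : Setoid S)
    (hle : ∀ x y, s.r x y → t.r x y) (hne : ¬ ∀ x y, t.r x y → s.r x y) :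
    Fintype.card (Quotient t) < Fintype.card (Quotient s) := by
  let f : Quotient s → Quotient t :=
    Quotient.lift (fun x => Quotient.mk t x)
      (fun a b h => Quotient.sound (hle a b h))
  have hsurj : Function.Surjective f := by
    intro q
    obtain ⟨x, rfl⟩ := Quotient.exists_rep q
    exact ⟨Quotient.mk s x, rfl⟩
  have hle' : Fintype.card (Quotient t) ≤ Fintype.card (Quotient s) :=
    Fintype.card_le_of_surjective f hsurj
  rcases hle'.lt_or_eq with hlt | heq
  · exact hlt
  · exfalso
    have hbij : Function.Bijective f :=
      (Fintype.bijective_iff_surjective_and_card f).2 ⟨hsurj, heq.symm⟩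
    apply hne
    intro x y hxy
    have hfx : f (Quotient.mk s x) = f (Quotient.mk s y) := Quotient.sound hxy
    exact Quotient.exact (hbij.1 hfx)

def sumDFA (D : DFA' Q A) (D' : DFA' Q' A) : DFA' (Q ⊕ Q') A where
  init := Sum.inl D.init
  step s a := Sum.elim (fun q => Sum.inl (D.step q a)) (fun q => Sum.inr (D'.step q a)) s
  acc := Sum.elim D.acc D'.acc

lemma steps_inl (D : DFA' Q A) (D' : DFA' Q' A) (q : Q) (w : List A) :
    (sumDFA D D').steps (Sum.inl q) w = Sum.inl (D.steps q w) := by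
  induction w generalizing q with
  | nil => rfl
  | cons a w ih => simpa [DFA'.steps, sumDFA] using ih (D.step q a)

lemma steps_inr (D : DFA' Q A) (D' : DFA' Q' A) (q : Q') (w : List A) :
    (sumDFA D D').steps (Sum.inr q) w = Sum.inr (D'.steps q w) := by
  induction w generalizing q with
  | nil => rfl
  | cons a w ih => simpa [DFA'.steps, sumDFA] using ih (D'.step q a)

lemma dist_iff (D : DFA' Q A) (D' : DFA' Q' A) (w : List A) :
    ¬ (D.Accepts w ↔ D'.Accepts w) ↔
      ¬ ((sumDFA D D').acc ((sumDFA D D').steps (Sum.inl D.init) w) ↔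
         (sumDFA D D').acc ((sumDFA D D').steps (Sum.inr D'.init) w)) := by
  rw [steps_inl, steps_inr]
  rfl

end DFAAux

open DFAAux in
theorem stmt_1 {Q Q' A : Type} [Fintype Q] [Fintype Q']
    (D : DFA' Q A) (D' : DFA' Q' A)
    (h : ∃ w : List A, ¬ (D.Accepts w ↔ D'.Accepts w)) :
    ∃ w : List A, w.length ≤ Fintype.card Q + Fintype.card Q' - 2 ∧
      ¬ (D.Accepts w ↔ D'.Accepts w) := by
  classical
  set C := sumDFA D D' with hC
  set s₀ : Q ⊕ Q' := Sum.inl D.init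
  set t₀ : Q ⊕ Q' := Sum.inr D'.init
  -- existence of a length bound at which the initial pair is separated
  have hex : ∃ n : ℕ, ¬ (eqv C n).r s₀ t₀ := by
    obtain ⟨w, hw⟩ := h
    refine ⟨w.length, fun hr => ?_⟩
    exact ((dist_iff D D' w).mp hw) (hr w le_rfl)
  let N := Nat.find hex
  have hN : ¬ (eqv C N).r s₀ t₀ := Nat.find_spec hex
  have hNmin : ∀ i < N, (eqv C i).r s₀ t₀ := fun i hi =>
    not_not.mp (Nat.find_min hex hi)
  -- extract a distinguishing word of length ≤ N
  have hword : ∃ w : List A, w.length ≤ N ∧ ¬ (D.Accepts w ↔ D'.Accepts w) := by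
    by_contra hcon
    push_neg at hcon
    apply hN
    intro w hw
    have hok := hcon w hw
    by_contra hcc
    exact (not_not.mpr hok) ((dist_iff D D' w).mpr hcc)
  obtain ⟨w, hwlen, hwdist⟩ := hword
  refine ⟨w, ?_, hwdist⟩
  -- remains: N ≤ card Q + card Q' - 2, then w.length ≤ N ≤ bound
  have key : N ≤ Fintype.card Q + Fintype.card Q' - 2 := by
    -- strict chain of setoids
    have hchain : ∀ i < N, ¬ ∀ x y, (eqv C i).r x y → (eqv C (i+1)).r x y := by
      intro i hi hstab
      have := eqv_stable C i hstab N (by omega) s₀ t₀ (hNmin i hi)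
      exact hN this
    -- class counts
    have hmono : ∀ i < N, Fintype.card (Quotient (eqv C i)) < Fintype.card (Quotient (eqv C (i+1))) := by
      intro i hi
      exact card_lt (eqv C (i+1)) (eqv C i)
        (fun x y hxy => eqv_mono C i hxy) (hchain i hi)
    have hgrow : ∀ i ≤ N, Fintype.card (Quotient (eqv C 0)) + i ≤ Fintype.card (Quotient (eqv C i)) := by
      intro i hi
      induction i with
      | zero => simp
      | succ k ih =>
          have h1 := ih (by omega)
          have h2 := hmono k (by omega)
          omega
    -- base classes ≥ 2
    have hc0 : 2 ≤ Fintype.card (Quotient (eqv C 0)) := by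
      have hwd := (dist_iff D D' w).mp hwdist
      set u := C.steps s₀ w
      set v := C.steps t₀ w
      have huv : ¬ (eqv C 0).r u v := by
        intro hr
        exact hwd (hr [] (by simp))
      have : (Quotient.mk (eqv C 0) u) ≠ (Quotient.mk (eqv C 0) v) := by
        intro he
        exact huv (Quotient.exact he)
      have := Fintype.one_lt_card_iff_nontrivial.mpr ⟨_, _, this⟩
      omega
    -- Fintype.card (Quotient (eqv C N)) ≤ card (Q ⊕ Q')
    have hcN : Fintype.card (Quotient (eqv C N)) ≤ Fintype.card Q + Fintype.card Q' := by
      have hsurj : Function.Surjective (Quotient.mk (eqv C N)) :=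
        fun q => Quotient.exists_rep q
      have := Fintype.card_le_of_surjective _ hsurj
      simpa [Fintype.card_sum] using this
    have := hgrow N le_rfl
    omega
  omega
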